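/- Assume the system is q-eigenvalue observable with s ≤ q ≤ 2s, and the data Y_1,…,Y_p are generated under at most s attacks from x_true with attacked sensor set Λ_A, |Λ_A| ≤ s. Then for every subspace index j: P_j x_true ∈ X_j, every element of X_j other than P_j x_true agrees only with sensors in Λ_A ∩ Obs_j, and the number of elements of X_j different from P_j x_true is at most ⌊s/(q+1−s)⌋. (Bound on the number of fake substates an attacker can inject into a subspace.) -/

import Mathlib

open Matrix

noncomputable section

/-- Generalized eigenspace of `A` for the eigenvalue `μ`: `ker((A - μ I)^n)`. -/
def genEig {n : ℕ} (A : Matrix (Fin n) (Fin n) ℝ) (μ : ℝ) : Set (Fin n → ℝ) :=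
  {x | ((A - μ • 1) ^ n).mulVec x = 0}

/-- Observability map of sensor `i` over horizon `t`: `(𝒪_i x)_τ = C_i A^τ x`. -/
def obsMap {n p : ℕ} (t : ℕ) (A : Matrix (Fin n) (Fin n) ℝ)
    (C : Matrix (Fin p) (Fin n) ℝ) (i : Fin p) (x : Fin n → ℝ) : Fin (t + 1) → ℝ :=
  fun τ => ((C * A ^ (τ : ℕ)).mulVec x) i

/-- `x` is a plausible state for the data `Y`: some set `Γ` of `p - s` sensors is
exactly explained by `x`. -/
def plausible {n p : ℕ} (t : ℕ) (A : Matrix (Fin n) (Fin n) ℝ)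
    (C : Matrix (Fin p) (Fin n) ℝ) (s : ℕ) (Y : Fin p → Fin (t + 1) → ℝ)
    (x : Fin n → ℝ) : Prop :=
  ∃ Γ : Finset (Fin p), Γ.card = p - s ∧ ∀ i ∈ Γ, obsMap t A C i x = Y i

/-- The eigenvalue `μ` of `A` is observable with respect to sensor `i` (over `ℂ`). -/
def eigObs {n p : ℕ} (A : Matrix (Fin n) (Fin n) ℝ)
    (C : Matrix (Fin p) (Fin n) ℝ) (μ : ℝ) (i : Fin p) : Prop :=
  ∀ v : Fin n → ℂ, (A.map Complex.ofReal).mulVec v = (μ : ℂ) • v →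
    ((C.map Complex.ofReal).mulVec v) i = 0 → v = 0

/-- The substate `xj ∈ V^j` agrees with sensor `i`: some choice of substates in the
other generalized eigenspaces makes the total response match the data `Y i`. -/
def agrees {n p r : ℕ} (t : ℕ) (A : Matrix (Fin n) (Fin n) ℝ)
    (C : Matrix (Fin p) (Fin n) ℝ) (lam : Fin r → ℝ)
    (Y : Fin p → Fin (t + 1) → ℝ) (j : Fin r) (xj : Fin n → ℝ) (i : Fin p) : Prop :=
  ∃ z : Fin r → Fin n → ℝ, (∀ k, k ≠ j → z k ∈ genEig A (lam k)) ∧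
    obsMap t A C i (xj + ∑ k ∈ Finset.univ.erase j, z k) = Y i

/-- `X_j`: the substates in `V^j` that agree with at least `q + 1 - s` sensors for
which `λ_j` is observable. -/
def Xset {n p r : ℕ} (t : ℕ) (A : Matrix (Fin n) (Fin n) ℝ)
    (C : Matrix (Fin p) (Fin n) ℝ) (lam : Fin r → ℝ)
    (Y : Fin p → Fin (t + 1) → ℝ) (s q : ℕ) (j : Fin r) : Set (Fin n → ℝ) :=
  {xj | xj ∈ genEig A (lam j) ∧
    q + 1 - s ≤ {i : Fin p | eigObs A C (lam j) i ∧ agrees t A C lam Y j xj i}.ncard}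

/-- `I_j(xj)`: the sensors that do not agree with the substate `xj`. -/
def Iset {n p r : ℕ} (t : ℕ) (A : Matrix (Fin n) (Fin n) ℝ)
    (C : Matrix (Fin p) (Fin n) ℝ) (lam : Fin r → ℝ)
    (Y : Fin p → Fin (t + 1) → ℝ) (j : Fin r) (xj : Fin n → ℝ) : Set (Fin p) :=
  {i | ¬ agrees t A C lam Y j xj i}

/-!
A sensor `i` observing `λ_j` pins down the `V^j`-component of any state it agrees with. If two
candidates differed, the difference of the full states would be invisible to `i` for `n` steps,
hence for all times by Cayley–Hamilton; a polynomial in `A` (a Bezout multiplier of the coprime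
factors `(X - λ_k) ^ n`) projects it onto `V^j`, and a further power of `A - λ_j` turns a
nonzero component into a real eigenvector for `λ_j` that `i` does not see.

Consequently the true substate agrees with the at least `q + 1 - s` unattacked sensors observing
`λ_j`, every fake substate agrees only with attacked ones, and distinct fake substates agree with
disjoint sets of at least `q + 1 - s` attacked sensors, of which there are at most `s`.
-/

open Polynomial

namespace Matrix

variable {R K ι : Type*} [Fintype ι] [DecidableEq ι]

theorem aeval_X_sub_C_pow [CommRing R] (A : Matrix ι ι R) (μ : R) (k : ℕ) :
    aeval A ((X - C μ) ^ k) = (A - μ • 1) ^ k := by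
  rw [map_pow, map_sub, aeval_X, aeval_C, Algebra.algebraMap_eq_smul_one]

theorem map_aeval_mulVec_eq_zero [CommRing R] [Nontrivial R] {M : Type*} [AddCommGroup M]
    [Module R M] {A : Matrix ι ι R} {x : ι → R} (L : (ι → R) →ₗ[R] M)
    (h : ∀ m < Fintype.card ι, L (A ^ m *ᵥ x) = 0) (f : R[X]) : L (aeval A f *ᵥ x) = 0 := by
  rw [aeval_eq_aeval_mod_charpoly]
  by_cases hf : f %ₘ A.charpoly = 0
  · simp [hf]
  have hdeg : (f %ₘ A.charpoly).natDegree < Fintype.card ι := by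
    rw [← A.charpoly_natDegree_eq_dim]
    exact natDegree_lt_natDegree hf (degree_modByMonic_lt _ A.charpoly_monic)
  rw [aeval_eq_sum_range' hdeg, sum_mulVec, map_sum]
  exact Finset.sum_eq_zero fun m hm => by
    rw [smul_mulVec, map_smul, h m (Finset.mem_range.1 hm), smul_zero]

theorem exists_aeval_mulVec_sum_eq [Field K] {κ : Type*} [Fintype κ] [DecidableEq κ]
    {A : Matrix ι ι K} {lam : κ → K} (hlam : Function.Injective lam) {N : ℕ}
    {c : κ → ι → K} (hc : ∀ k, (A - lam k • 1) ^ N *ᵥ c k = 0) (j : κ) :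
    ∃ f : K[X], aeval A f *ᵥ ∑ k, c k = c j := by
  set g := ∏ k ∈ Finset.univ.erase j, (X - C (lam k)) ^ N with hg
  obtain ⟨u, v, huv⟩ : IsCoprime ((X - C (lam j)) ^ N) g :=
    IsCoprime.prod_right fun k hk =>
      (pairwise_coprime_X_sub_C hlam (Finset.ne_of_mem_erase hk).symm).pow
  have hkill : ∀ k ≠ j, aeval A (v * g) *ᵥ c k = 0 := by
    intro k hk
    rw [hg, ← Finset.prod_erase_mul _ _ (Finset.mem_erase.2 ⟨hk, Finset.mem_univ k⟩),
      ← mul_assoc, map_mul, ← mulVec_mulVec, aeval_X_sub_C_pow, hc k, mulVec_zero]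
  have hfix : aeval A (v * g) *ᵥ c j = c j := by
    rw [eq_sub_of_add_eq' huv, map_sub, map_one, map_mul, sub_mulVec, one_mulVec,
      ← mulVec_mulVec, aeval_X_sub_C_pow, hc j, mulVec_zero, sub_zero]
  refine ⟨v * g, ?_⟩
  rw [mulVec_sum, Finset.sum_eq_single_of_mem j (Finset.mem_univ j) fun k _ hk => hkill k hk,
    hfix]

theorem exists_pow_mulVec_eigenvector [CommRing R] {A : Matrix ι ι R} {μ : R} {N : ℕ}
    {x : ι → R} (hx : (A - μ • 1) ^ N *ᵥ x = 0) (hx0 : x ≠ 0) :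
    ∃ m, (A - μ • 1) ^ m *ᵥ x ≠ 0 ∧
      A *ᵥ ((A - μ • 1) ^ m *ᵥ x) = μ • ((A - μ • 1) ^ m *ᵥ x) := by
  induction N generalizing x with
  | zero => exact absurd (by simpa using hx) hx0
  | succ N ih =>
    by_cases hy : (A - μ • 1) *ᵥ x = 0
    · refine ⟨0, by simpa using hx0, ?_⟩
      rw [pow_zero, one_mulVec, ← sub_eq_zero]
      rwa [sub_mulVec, smul_mulVec, one_mulVec] at hy
    · rw [pow_succ, ← mulVec_mulVec] at hx
      obtain ⟨m, hm⟩ := ih hx hy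
      exact ⟨m + 1, by simpa only [pow_succ, ← mulVec_mulVec] using hm⟩

end Matrix

open Matrix

section Observability

variable {n p r t : ℕ} {A : Matrix (Fin n) (Fin n) ℝ} {C : Matrix (Fin p) (Fin n) ℝ}
  {lam : Fin r → ℝ}

theorem obsMap_sub (i : Fin p) (x y : Fin n → ℝ) :
    obsMap t A C i (x - y) = obsMap t A C i x - obsMap t A C i y :=
  funext fun _ => by simp [obsMap, mulVec_sub]

theorem eigObs.eq_zero {μ : ℝ} {i : Fin p} (hobs : eigObs A C μ i) {v : Fin n → ℝ}
    (hv : A *ᵥ v = μ • v) (hCv : (C *ᵥ v) i = 0) : v = 0 := by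
  have hw := hobs (Complex.ofRealHom ∘ v)
    (funext fun k => (RingHom.map_mulVec Complex.ofRealHom A v k).symm.trans (by simp [hv]))
    ((RingHom.map_mulVec Complex.ofRealHom C v i).symm.trans (by simp [hCv]))
  exact funext fun k => by simpa using congrFun hw k

theorem component_eq_zero_of_obsMap_eq_zero (ht : n - 1 ≤ t) (hlam : Function.Injective lam)
    {i : Fin p} {j : Fin r} (hobs : eigObs A C (lam j) i) {c : Fin r → Fin n → ℝ}
    (hc : ∀ k, c k ∈ genEig A (lam k)) (h0 : obsMap t A C i (∑ k, c k) = 0) : c j = 0 := by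
  by_contra hne
  have hunobs : ∀ f : ℝ[X], (C *ᵥ (aeval A f *ᵥ ∑ k, c k)) i = 0 :=
    map_aeval_mulVec_eq_zero ((LinearMap.proj i).comp C.mulVecLin) fun m hm => by
      rw [Fintype.card_fin] at hm
      simpa [obsMap, mulVec_mulVec] using congrFun h0 ⟨m, by omega⟩
  obtain ⟨f, hf⟩ := exists_aeval_mulVec_sum_eq hlam hc j
  obtain ⟨m, hv0, hv⟩ := exists_pow_mulVec_eigenvector (hc j) hne
  refine hv0 (hobs.eq_zero hv ?_)
  rw [← hf, ← aeval_X_sub_C_pow, mulVec_mulVec _ (aeval A _), ← map_mul]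
  exact hunobs _

theorem agrees_of_obsMap_sum_eq {Y : Fin p → Fin (t + 1) → ℝ} {i : Fin p} (j : Fin r)
    {c : Fin r → Fin n → ℝ} (hc : ∀ k, c k ∈ genEig A (lam k))
    (hY : obsMap t A C i (∑ k, c k) = Y i) : agrees t A C lam Y j (c j) i :=
  ⟨c, fun k _ => hc k, by rwa [Finset.add_sum_erase _ _ (Finset.mem_univ j)]⟩

theorem eq_of_agrees (ht : n - 1 ≤ t) (hlam : Function.Injective lam)
    {Y : Fin p → Fin (t + 1) → ℝ} {i : Fin p} {j : Fin r} (hobs : eigObs A C (lam j) i)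
    {x y : Fin n → ℝ} (hx : x ∈ genEig A (lam j)) (hy : y ∈ genEig A (lam j))
    (hxi : agrees t A C lam Y j x i) (hyi : agrees t A C lam Y j y i) : x = y := by
  obtain ⟨z, hz, hzY⟩ := hxi
  obtain ⟨w, hw, hwY⟩ := hyi
  set c := Function.update (z - w) j (x - y)
  have hc : ∀ k, c k ∈ genEig A (lam k) := by
    intro k
    rcases eq_or_ne k j with rfl | hk
    · simp [c, genEig, mulVec_sub, show _ = _ from hx, show _ = _ from hy]
    · simp [c, hk, genEig, mulVec_sub, show _ = _ from hz k hk, show _ = _ from hw k hk]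
  have hsum : ∑ k, c k
      = (x + ∑ k ∈ Finset.univ.erase j, z k) - (y + ∑ k ∈ Finset.univ.erase j, w k) := by
    rw [← Finset.add_sum_erase _ _ (Finset.mem_univ j), Finset.sum_congr rfl fun k hk =>
      Function.update_of_ne (Finset.ne_of_mem_erase hk) _ _]
    simp only [c, Function.update_self, Pi.sub_apply, Finset.sum_sub_distrib]
    abel
  have h0 : obsMap t A C i (∑ k, c k) = 0 := by
    rw [hsum, obsMap_sub, hzY, hwY, sub_self]
  simpa [c, sub_eq_zero] using component_eq_zero_of_obsMap_eq_zero ht hlam hobs hc h0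

end Observability

theorem Finset.card_mul_le_card_of_pairwiseDisjoint {α β : Type*} [DecidableEq β]
    {G : Finset α} {T : α → Finset β} {Λ : Finset β} {k : ℕ} (hsub : ∀ x ∈ G, T x ⊆ Λ)
    (hcard : ∀ x ∈ G, k ≤ (T x).card) (hdisj : (G : Set α).PairwiseDisjoint T) :
    G.card * k ≤ Λ.card :=
  calc G.card * k ≤ ∑ x ∈ G, (T x).card := by simpa using G.card_nsmul_le_sum _ _ hcard
    _ = (G.biUnion T).card := (Finset.card_biUnion hdisj).symm
    _ ≤ Λ.card := Finset.card_le_card (Finset.biUnion_subset.2 hsub)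

theorem Set.ncard_mul_le_card_of_pairwiseDisjoint {α β : Type*} [DecidableEq β]
    {F : Set α} {T : α → Finset β} {Λ : Finset β} {k : ℕ} (hk : 0 < k)
    (hsub : ∀ x ∈ F, T x ⊆ Λ) (hcard : ∀ x ∈ F, k ≤ (T x).card)
    (hdisj : F.PairwiseDisjoint T) : F.ncard * k ≤ Λ.card := by
  have hfinset : ∀ G : Finset α, ↑G ⊆ F → G.card * k ≤ Λ.card := fun G hG =>
    Finset.card_mul_le_card_of_pairwiseDisjoint (fun x hx => hsub x (hG hx))
      (fun x hx => hcard x (hG hx)) (hdisj.subset hG)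
  have hfin : F.Finite := by
    by_contra hinf
    obtain ⟨G, hG, hGcard⟩ := Set.Infinite.exists_subset_card_eq hinf (Λ.card + 1)
    have := hfinset G hG
    rw [hGcard] at this
    nlinarith
  simpa [Set.ncard_eq_toFinset_card F hfin] using hfinset hfin.toFinset (by simp)

section Substates

variable {n p r t s q : ℕ} {A : Matrix (Fin n) (Fin n) ℝ} {C : Matrix (Fin p) (Fin n) ℝ}
  {lam : Fin r → ℝ} {Y : Fin p → Fin (t + 1) → ℝ} {j : Fin r}

theorem mem_Xset_of_agrees {ΛA : Finset (Fin p)} (hΛA : ΛA.card ≤ s)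
    (hobs : q + 1 ≤ {i : Fin p | eigObs A C (lam j) i}.ncard) {x : Fin n → ℝ}
    (hx : x ∈ genEig A (lam j)) (hagree : ∀ i ∉ ΛA, agrees t A C lam Y j x i) :
    x ∈ Xset t A C lam Y s q j := by
  refine ⟨hx, ?_⟩
  have hsub : {i : Fin p | eigObs A C (lam j) i} \ ΛA
      ⊆ {i : Fin p | eigObs A C (lam j) i ∧ agrees t A C lam Y j x i} :=
    fun i hi => ⟨hi.1, hagree i hi.2⟩
  have hsplit := Set.ncard_le_ncard_sdiff_add_ncard {i : Fin p | eigObs A C (lam j) i} ΛA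
  rw [Set.ncard_coe_finset] at hsplit
  have := Set.ncard_le_ncard hsub
  omega

end Substates

theorem fake_substate_count_bound_general
    {n p r s q t : ℕ} (hsq : s ≤ q) (ht : n - 1 ≤ t)
    (A : Matrix (Fin n) (Fin n) ℝ) (C : Matrix (Fin p) (Fin n) ℝ)
    (lam : Fin r → ℝ) (hlam : Function.Injective lam)
    (P : Fin r → Matrix (Fin n) (Fin n) ℝ)
    (hPmem : ∀ j, ∀ x : Fin n → ℝ, (P j).mulVec x ∈ genEig A (lam j))
    (hPsum : ∀ x : Fin n → ℝ, ∑ j, (P j).mulVec x = x)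
    (Y : Fin p → Fin (t + 1) → ℝ) (xtrue : Fin n → ℝ)
    (ΛA : Finset (Fin p)) (hΛA : ΛA.card ≤ s)
    (hdata : ∀ i ∉ ΛA, Y i = obsMap t A C i xtrue)
    (hqobs : ∀ j, q + 1 ≤ {i : Fin p | eigObs A C (lam j) i}.ncard) :
    ∀ j : Fin r,
      ((P j).mulVec xtrue ∈ Xset t A C lam Y s q j) ∧
      (∀ xj ∈ Xset t A C lam Y s q j, xj ≠ (P j).mulVec xtrue →
        ∀ i : Fin p, eigObs A C (lam j) i → agrees t A C lam Y j xj i → i ∈ ΛA) ∧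
      {xj : Fin n → ℝ | xj ∈ Xset t A C lam Y s q j ∧
          xj ≠ (P j).mulVec xtrue}.ncard ≤ s / (q + 1 - s) := by
  classical
  intro j
  have htrue : ∀ i ∉ ΛA, agrees t A C lam Y j (P j *ᵥ xtrue) i := fun i hi =>
    agrees_of_obsMap_sum_eq (c := fun k => P k *ᵥ xtrue) j (fun k => hPmem k xtrue)
      (by rw [hPsum, hdata i hi])
  have honly : ∀ x ∈ Xset t A C lam Y s q j, x ≠ P j *ᵥ xtrue →
      ∀ i, eigObs A C (lam j) i → agrees t A C lam Y j x i → i ∈ ΛA :=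
    fun x hx hne i hobs hi => by_contra fun hiA =>
      hne (eq_of_agrees ht hlam hobs hx.1 (hPmem j xtrue) hi (htrue i hiA))
  refine ⟨mem_Xset_of_agrees hΛA (hqobs j) (hPmem j xtrue) htrue, honly, ?_⟩
  set T : (Fin n → ℝ) → Finset (Fin p) :=
    fun x => {i | eigObs A C (lam j) i ∧ agrees t A C lam Y j x i}
  rw [Nat.le_div_iff_mul_le (by omega)]
  refine (Set.ncard_mul_le_card_of_pairwiseDisjoint (T := T) (by omega) ?_ ?_ ?_).trans hΛA
  · exact fun x hx i hi =>
      let ⟨_, hobs, hag⟩ := Finset.mem_filter.1 hi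
      honly x hx.1 hx.2 i hobs hag
  · exact fun x hx => by simpa [T, Set.ncard_eq_toFinset_card'] using hx.1.2
  · exact fun x hx y hy hxy => Finset.disjoint_left.2 fun i hix hiy =>
      let ⟨_, hobs, hxi⟩ := Finset.mem_filter.1 hix
      hxy (eq_of_agrees ht hlam hobs hx.1.1 hy.1.1 hxi (Finset.mem_filter.1 hiy).2.2)

/-- the true substate belongs to `X_j`; any other element of `X_j`
agrees, among the sensors observing `λ_j`, only with attacked sensors; and the number
of fake substates in `X_j` is at most `⌊s / (q + 1 - s)⌋`. -/
theorem fake_substate_count_bound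
    {n p r s q t : ℕ} (hsp : s ≤ p) (hsq : s ≤ q) (hq2s : q ≤ 2 * s) (ht : n - 1 ≤ t)
    (A : Matrix (Fin n) (Fin n) ℝ) (C : Matrix (Fin p) (Fin n) ℝ)
    (lam : Fin r → ℝ) (hlam : Function.Injective lam)
    (heig : ∀ j, ∃ w : Fin n → ℝ, w ≠ 0 ∧ A.mulVec w = lam j • w)
    (P : Fin r → Matrix (Fin n) (Fin n) ℝ)
    (hPmem : ∀ j, ∀ x : Fin n → ℝ, (P j).mulVec x ∈ genEig A (lam j))
    (hPsum : ∀ x : Fin n → ℝ, ∑ j, (P j).mulVec x = x)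
    (Y : Fin p → Fin (t + 1) → ℝ) (xtrue : Fin n → ℝ)
    (ΛA : Finset (Fin p)) (hΛA : ΛA.card ≤ s)
    (hdata : ∀ i ∉ ΛA, Y i = obsMap t A C i xtrue)
    (hqobs : ∀ j, q + 1 ≤ {i : Fin p | eigObs A C (lam j) i}.ncard) :
    ∀ j : Fin r,
      ((P j).mulVec xtrue ∈ Xset t A C lam Y s q j) ∧
      (∀ xj ∈ Xset t A C lam Y s q j, xj ≠ (P j).mulVec xtrue →
        ∀ i : Fin p, eigObs A C (lam j) i → agrees t A C lam Y j xj i → i ∈ ΛA) ∧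
      {xj : Fin n → ℝ | xj ∈ Xset t A C lam Y s q j ∧
          xj ≠ (P j).mulVec xtrue}.ncard ≤ s / (q + 1 - s) :=
  fake_substate_count_bound_general hsq ht A C lam hlam P hPmem hPsum Y xtrue ΛA hΛA hdata hqobs
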